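/- Let V be a real inner product space, c ≥ 1, and let ζ, ζ' be nonzero vectors with ‖ζ'‖ ≥ 4√c·‖ζ‖ and ‖ζ/‖ζ‖ − ζ'/‖ζ'‖‖ ≤ 1/(4√c). Let b' be a positive integer and set b = ⌊b'·‖ζ'‖/‖ζ‖⌋ + 1. Then ‖b·ζ − b'·ζ'‖ ≤ b'·‖ζ'‖/(2√c). -/

import Mathlib

/-- Key metric estimate comparing rescaled points in a narrow cone. -/
theorem rescaled_points_close {V : Type*} [NormedAddCommGroup V] [InnerProductSpace ℝ V]
    (c : ℝ) (hc : 1 ≤ c) (ζ ζ' : V) (hζ : ζ ≠ 0) (hζ' : ζ' ≠ 0)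
    (h1 : ‖ζ'‖ ≥ 4 * Real.sqrt c * ‖ζ‖)
    (h2 : ‖‖ζ‖⁻¹ • ζ - ‖ζ'‖⁻¹ • ζ'‖ ≤ 1 / (4 * Real.sqrt c))
    (b' : ℕ) (hb' : 0 < b') (b : ℤ) (hb : b = ⌊(b' : ℝ) * ‖ζ'‖ / ‖ζ‖⌋ + 1) :
    ‖b • ζ - (b' : ℤ) • ζ'‖ ≤ (b' : ℝ) * ‖ζ'‖ / (2 * Real.sqrt c) := by
  have hs : (1:ℝ) ≤ Real.sqrt c := by
    rw [show (1:ℝ) = Real.sqrt 1 by simp]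
    exact Real.sqrt_le_sqrt hc
  set s := Real.sqrt c with hsdef
  have hs0 : (0:ℝ) < s := lt_of_lt_of_le one_pos hs
  have hr : 0 < ‖ζ‖ := norm_pos_iff.mpr hζ
  have hr' : 0 < ‖ζ'‖ := norm_pos_iff.mpr hζ'
  set x := (b' : ℝ) * ‖ζ'‖ / ‖ζ‖ with hx
  have hxlt : x < (b : ℝ) := by
    rw [hb]; push_cast; exact Int.lt_floor_add_one x
  have hble : (b : ℝ) ≤ x + 1 := by
    rw [hb]; push_cast; linarith [Int.floor_le x]
  have hb'1 : (1:ℝ) ≤ (b' : ℝ) := by exact_mod_cast hb'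
  have key : b • ζ - (b' : ℤ) • ζ' =
      ((b : ℝ) * ‖ζ‖ - (b' : ℝ) * ‖ζ'‖) • (‖ζ‖⁻¹ • ζ) +
        ((b' : ℝ) * ‖ζ'‖) • (‖ζ‖⁻¹ • ζ - ‖ζ'‖⁻¹ • ζ') := by
    rw [← Int.cast_smul_eq_zsmul ℝ b, ← Int.cast_smul_eq_zsmul ℝ (b' : ℤ)]
    push_cast
    rw [smul_sub, smul_smul, smul_smul, smul_smul]
    rw [mul_inv_cancel_right₀ hr'.ne', sub_mul, mul_inv_cancel_right₀ hr.ne']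
    module
  have hunit : ‖(‖ζ‖⁻¹ • ζ)‖ = 1 := by
    rw [norm_smul, norm_inv, norm_norm, inv_mul_cancel₀ hr.ne']
  have hbx : (b' : ℝ) * ‖ζ'‖ = x * ‖ζ‖ := by
    rw [hx, div_mul_cancel₀ _ hr.ne']
  have hA : |(b : ℝ) * ‖ζ‖ - (b' : ℝ) * ‖ζ'‖| ≤ ‖ζ‖ := by
    rw [hbx, abs_le]
    constructor <;> nlinarith
  have hrle : ‖ζ‖ ≤ (b' : ℝ) * ‖ζ'‖ / (4 * s) := by
    rw [le_div_iff₀ (by linarith)]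
    nlinarith
  have hB : ((b' : ℝ) * ‖ζ'‖) * ‖‖ζ‖⁻¹ • ζ - ‖ζ'‖⁻¹ • ζ'‖ ≤
      (b' : ℝ) * ‖ζ'‖ / (4 * s) := by
    calc ((b' : ℝ) * ‖ζ'‖) * ‖‖ζ‖⁻¹ • ζ - ‖ζ'‖⁻¹ • ζ'‖
        ≤ ((b' : ℝ) * ‖ζ'‖) * (1 / (4 * s)) :=
          mul_le_mul_of_nonneg_left h2 (by positivity)
      _ = (b' : ℝ) * ‖ζ'‖ / (4 * s) := by ring
  calc ‖b • ζ - (b' : ℤ) • ζ'‖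
      = ‖((b : ℝ) * ‖ζ‖ - (b' : ℝ) * ‖ζ'‖) • (‖ζ‖⁻¹ • ζ) +
          ((b' : ℝ) * ‖ζ'‖) • (‖ζ‖⁻¹ • ζ - ‖ζ'‖⁻¹ • ζ')‖ := by rw [key]
    _ ≤ ‖((b : ℝ) * ‖ζ‖ - (b' : ℝ) * ‖ζ'‖) • (‖ζ‖⁻¹ • ζ)‖ +
          ‖((b' : ℝ) * ‖ζ'‖) • (‖ζ‖⁻¹ • ζ - ‖ζ'‖⁻¹ • ζ')‖ := norm_add_le _ _
    _ ≤ ‖ζ‖ + (b' : ℝ) * ‖ζ'‖ / (4 * s) := by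
        gcongr ?_ + ?_
        · rw [norm_smul, hunit, mul_one, Real.norm_eq_abs]; exact hA
        · rw [norm_smul, Real.norm_eq_abs, abs_of_pos (by positivity)]; exact hB
    _ ≤ (b' : ℝ) * ‖ζ'‖ / (4 * s) + (b' : ℝ) * ‖ζ'‖ / (4 * s) := by linarith
    _ = (b' : ℝ) * ‖ζ'‖ / (2 * s) := by field_simp; ring
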